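/- arXiv:1004.5227 — 7 statements merged into one kernel-verified Lean document; each statement's English description precedes it below -/
import Mathlib

section
/- For fixed t > 0, the function k ↦ h(t;k) is strictly increasing in k on any interval avoiding the singularities, where h(t;k) = √(t−k²)·cot(√(t−k²)) if t > k², h(t;k) = √(k²−t)·coth(√(k²−t)) if k² > t, and h(t;k) = 1 if t = k². (Strict monotonicity in k holds for k > 0 with t − k² ∉ {n²π² : n ∈ ℤ₊}.) -/
/-!
Writing `h(t;k) = g(t - k²)` (`g` is `hProfile`), it suffices that `g` is strictly decreasing
between consecutive poles `n²π²`. For `x > 0` and `x < 0`, `g` is `u ↦ u cot u` resp.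
`v ↦ v coth v` composed with `√x` resp. `√(-x)`, and the derivatives `(sin u cos u - u)/sin² u`
and `(sinh v cosh v - v)/sinh² v` have the signs of `sin 2u - 2u < 0` and `sinh 2v - 2v > 0`.
Across `x = 0` the branches are glued by `u cot u < 1 < v coth v`, which is the mean value
theorem for `sin` and `sinh`. As `k` increases through a connected set of positive numbers,
`t - k²` decreases through a connected set free of poles, so it stays between two consecutive ones.
-/

/-- The piecewise function `h(t;k)`: `√(t−k²)·cot(√(t−k²))` if `t > k²`,
`√(k²−t)·coth(√(k²−t))` if `k² > t`, and `1` if `t = k²`. -/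
noncomputable def hFun (t k : ℝ) : ℝ :=
  if k ^ 2 < t then
    Real.sqrt (t - k ^ 2) * (Real.cos (Real.sqrt (t - k ^ 2)) / Real.sin (Real.sqrt (t - k ^ 2)))
  else if t < k ^ 2 then
    Real.sqrt (k ^ 2 - t) * (Real.cosh (Real.sqrt (k ^ 2 - t)) / Real.sinh (Real.sqrt (k ^ 2 - t)))
  else 1

open Real Set

noncomputable def hProfile (x : ℝ) : ℝ :=
  if 0 < x then √x * (cos √x / sin √x)
  else if x < 0 then √(-x) * (cosh √(-x) / sinh √(-x))
  else 1

lemma hProfile_of_pos {x : ℝ} (hx : 0 < x) : hProfile x = √x * (cos √x / sin √x) :=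
  if_pos hx

lemma hProfile_of_neg {x : ℝ} (hx : x < 0) :
    hProfile x = √(-x) * (cosh √(-x) / sinh √(-x)) := by
  rw [hProfile, if_neg hx.not_gt, if_pos hx]

lemma hProfile_zero : hProfile 0 = 1 := by
  simp [hProfile]

lemma hFun_eq_hProfile (t k : ℝ) : hFun t k = hProfile (t - k ^ 2) := by
  rcases lt_trichotomy (k ^ 2) t with h | rfl | h
  · rw [hFun, if_pos h, hProfile_of_pos (sub_pos.2 h)]
  · simp [hFun, hProfile_zero]
  · rw [hFun, if_neg h.not_gt, if_pos h, hProfile_of_neg (sub_neg.2 h), neg_sub]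

lemma hasDerivAt_mul_coth {v : ℝ} (hv : sinh v ≠ 0) :
    HasDerivAt (fun v : ℝ => v * (cosh v / sinh v)) ((sinh v * cosh v - v) / sinh v ^ 2) v :=
  ((hasDerivAt_id' v).fun_mul ((hasDerivAt_cosh v).fun_div (hasDerivAt_sinh v) hv)).congr_deriv
    (by field_simp; linear_combination -v * cosh_sq v)

lemma hasDerivAt_mul_cot {u : ℝ} (hu : sin u ≠ 0) :
    HasDerivAt (fun u : ℝ => u * (cos u / sin u)) ((sin u * cos u - u) / sin u ^ 2) u :=
  ((hasDerivAt_id' u).fun_mul ((hasDerivAt_cos u).fun_div (hasDerivAt_sin u) hu)).congr_deriv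
    (by field_simp; linear_combination -u * sin_sq_add_cos_sq u)

lemma strictMonoOn_mul_coth : StrictMonoOn (fun v : ℝ => v * (cosh v / sinh v)) (Ioi 0) := by
  have hsinh : ∀ v ∈ Ioi (0 : ℝ), sinh v ≠ 0 := fun v hv => (sinh_pos_iff.2 hv).ne'
  refine strictMonoOn_of_deriv_pos (convex_Ioi 0)
    (continuousOn_id.mul (continuous_cosh.continuousOn.div continuous_sinh.continuousOn hsinh))
    fun v hv => ?_
  rw [interior_Ioi] at hv
  have h2v : 2 * v < 2 * sinh v * cosh v :=
    sinh_two_mul v ▸ self_lt_sinh_iff.2 (mul_pos two_pos hv)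
  rw [(hasDerivAt_mul_coth (hsinh v hv)).deriv]
  exact div_pos (by linarith) (pow_pos (sinh_pos_iff.2 hv) 2)

lemma strictAntiOn_mul_cot (n : ℕ) :
    StrictAntiOn (fun u : ℝ => u * (cos u / sin u)) (Ioo (n * π) ((n + 1) * π)) := by
  have hsin : ∀ u ∈ Ioo (n * π) ((n + 1) * π), sin u ≠ 0 := by
    refine fun u ⟨hnu, hun⟩ => sin_ne_zero_iff.2 fun m hm => ?_
    rw [← hm] at hnu hun
    have h₁ : (n : ℝ) < m := lt_of_mul_lt_mul_right hnu pi_pos.le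
    have h₂ : (m : ℝ) < n + 1 := lt_of_mul_lt_mul_right hun pi_pos.le
    norm_cast at h₁ h₂
    omega
  refine strictAntiOn_of_deriv_neg (convex_Ioo _ _)
    (continuousOn_id.mul (continuous_cos.continuousOn.div continuous_sin.continuousOn hsin))
    fun u hu => ?_
  rw [interior_Ioo] at hu
  have hu0 : 0 < u := lt_of_le_of_lt (by positivity) hu.1
  have h2u : 2 * sin u * cos u < 2 * u := sin_two_mul u ▸ sin_lt (mul_pos two_pos hu0)
  rw [(hasDerivAt_mul_cot (hsin u hu)).deriv]
  exact div_neg_of_neg_of_pos (by linarith) (by positivity [hsin u hu])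

lemma sinh_lt_mul_cosh {v : ℝ} (hv : 0 < v) : sinh v < v * cosh v := by
  obtain ⟨c, ⟨hc0, hcv⟩, hc⟩ := exists_hasDerivAt_eq_slope sinh cosh hv
    continuous_sinh.continuousOn fun c _ => hasDerivAt_sinh c
  rw [sinh_zero, sub_zero, sub_zero, eq_div_iff hv.ne'] at hc
  have : cosh c < cosh v := cosh_lt_cosh.2 (by rwa [abs_of_pos hc0, abs_of_pos hv])
  nlinarith

lemma mul_cos_lt_sin {u : ℝ} (hu : 0 < u) (huπ : u ≤ π) : u * cos u < sin u := by
  obtain ⟨c, ⟨hc0, hcu⟩, hc⟩ := exists_hasDerivAt_eq_slope sin cos hu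
    continuous_sin.continuousOn fun c _ => hasDerivAt_sin c
  rw [sin_zero, sub_zero, sub_zero, eq_div_iff hu.ne'] at hc
  have : cos u < cos c := cos_lt_cos_of_nonneg_of_le_pi hc0.le huπ hcu
  nlinarith

lemma one_lt_mul_coth {v : ℝ} (hv : 0 < v) : 1 < v * (cosh v / sinh v) := by
  rw [mul_div_assoc', one_lt_div (sinh_pos_iff.2 hv)]
  exact sinh_lt_mul_cosh hv

lemma mul_cot_lt_one {u : ℝ} (hu : 0 < u) (huπ : u < π) : u * (cos u / sin u) < 1 := by
  rw [mul_div_assoc', div_lt_one (sin_pos_of_pos_of_lt_pi hu huπ)]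
  exact mul_cos_lt_sin hu huπ.le

lemma hProfile_strictAntiOn_Ioo (n : ℕ) :
    StrictAntiOn hProfile (Ioo ((n * π) ^ 2) (((n + 1) * π) ^ 2)) := by
  have hpos : ∀ x ∈ Ioo ((n * π) ^ 2) (((n + 1) * π) ^ 2), 0 < x :=
    fun x hx => (sq_nonneg _).trans_lt hx.1
  have hmaps : MapsTo sqrt (Ioo ((n * π) ^ 2) (((n + 1) * π) ^ 2)) (Ioo (n * π) ((n + 1) * π)) :=
    fun x ⟨h₁, h₂⟩ => ⟨(lt_sqrt (by positivity)).2 h₁, (sqrt_lt' (by positivity)).2 h₂⟩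
  exact ((strictAntiOn_mul_cot n).comp_strictMonoOn
    (strictMonoOn_sqrt.mono fun x hx => (hpos x hx).le) hmaps).congr
    fun x hx => (hProfile_of_pos (hpos x hx)).symm

lemma hProfile_strictAntiOn_Iic : StrictAntiOn hProfile (Iic 0) := by
  intro x hx y (hy : y ≤ 0) hxy
  have hx0 : 0 < √(-x) := sqrt_pos.2 (by linarith)
  rw [hProfile_of_neg (hxy.trans_le hy)]
  rcases hy.lt_or_eq with hy | rfl
  · rw [hProfile_of_neg hy]
    exact strictMonoOn_mul_coth (sqrt_pos.2 (neg_pos.2 hy)) hx0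
      (sqrt_lt_sqrt (by linarith) (by linarith))
  · rw [hProfile_zero]
    exact one_lt_mul_coth hx0

lemma hProfile_strictAntiOn_Ico : StrictAntiOn hProfile (Ico 0 (π ^ 2)) := by
  intro x ⟨hx, _⟩ y ⟨hy, hyπ⟩ hxy
  have hy0 : 0 < y := hx.trans_lt hxy
  rcases hx.lt_or_eq with hx | rfl
  · have h := hProfile_strictAntiOn_Ioo 0
    rw [Nat.cast_zero, zero_mul, zero_add, one_mul, zero_pow two_ne_zero] at h
    exact h ⟨hx, hxy.trans hyπ⟩ ⟨hy0, hyπ⟩ hxy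
  · rw [hProfile_zero, hProfile_of_pos hy0]
    exact mul_cot_lt_one (sqrt_pos.2 hy0) ((sqrt_lt' pi_pos).2 hyπ)

lemma hProfile_strictAntiOn_Iio : StrictAntiOn hProfile (Iio (π ^ 2)) := by
  rw [← Iic_union_Ico_eq_Iio (by positivity)]
  exact hProfile_strictAntiOn_Iic.union hProfile_strictAntiOn_Ico isGreatest_Iic
    (isLeast_Ico (by positivity))

lemma exists_sq_mul_pi_le_lt {x : ℝ} (hx : 0 ≤ x) :
    ∃ n : ℕ, (n * π) ^ 2 ≤ x ∧ x < ((n + 1) * π) ^ 2 := by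
  refine ⟨⌊√x / π⌋₊, (le_sqrt (by positivity) hx).1 ?_, (sqrt_lt' (by positivity)).1 ?_⟩
  · exact (le_div_iff₀ pi_pos).1 (Nat.floor_le (by positivity))
  · exact (div_lt_iff₀ pi_pos).1 (Nat.lt_floor_add_one _)

lemma hProfile_lt_of_forall_Icc_ne {x y : ℝ} (hxy : x < y)
    (hpole : ∀ z ∈ Icc x y, ∀ n : ℕ, 0 < n → z ≠ (n : ℝ) ^ 2 * π ^ 2) :
    hProfile y < hProfile x := by
  rcases lt_or_ge y (π ^ 2) with hy | hy
  · exact hProfile_strictAntiOn_Iio (hxy.trans hy) hy hxy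
  have hx : π ^ 2 < x := by
    by_contra! hx
    exact hpole _ ⟨hx, hy⟩ 1 one_pos (by simp)
  obtain ⟨n, hnx, hxn⟩ := exists_sq_mul_pi_le_lt ((sq_nonneg π).trans hx.le)
  have hn : 0 < n := Nat.pos_of_ne_zero <| by
    rintro rfl
    rw [Nat.cast_zero, zero_add, one_mul] at hxn
    exact hxn.not_gt hx
  have hnx' : (n * π) ^ 2 < x :=
    hnx.lt_of_ne fun h => hpole x (left_mem_Icc.2 hxy.le) n hn (by rw [← h]; ring)
  have hyn : y < ((n + 1) * π) ^ 2 := by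
    by_contra! hyn
    exact hpole _ ⟨hxn.le, hyn⟩ (n + 1) n.succ_pos (by push_cast; ring)
  exact hProfile_strictAntiOn_Ioo n ⟨hnx', hxn⟩ ⟨hnx'.trans hxy, hyn⟩ hxy

theorem hFun_strictMono_in_k_general (t : ℝ) (s : Set ℝ) (hs : s.OrdConnected)
    (hpos : s ⊆ Set.Ioi 0)
    (hsing : ∀ k ∈ s, ∀ n : ℕ, 0 < n → t - k ^ 2 ≠ (n : ℝ) ^ 2 * Real.pi ^ 2) :
    StrictMonoOn (fun k => hFun t k) s := by
  intro a ha b hb hab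
  have ha0 : 0 < a := hpos ha
  simp only [hFun_eq_hProfile]
  refine hProfile_lt_of_forall_Icc_ne (by nlinarith) fun z ⟨hbz, hza⟩ n hn => ?_
  -- `z = t - k²` for `k = √(t - z) ∈ [a, b] ⊆ s`
  have htz : 0 ≤ t - z := by nlinarith
  have hk : √(t - z) ∈ s := hs.out ha hb
    ⟨(le_sqrt ha0.le htz).2 (by linarith), (sqrt_le_left (ha0.trans hab).le).2 (by linarith)⟩
  simpa [sq_sqrt htz] using hsing _ hk n hn

/-- For fixed `t > 0`, `k ↦ h(t;k)` is strictly increasing on any interval of positive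
numbers avoiding the singularities `t − k² = n²π²`, `n ∈ ℤ₊`. -/
theorem hFun_strictMono_in_k (t : ℝ) (ht : 0 < t) (s : Set ℝ) (hs : s.OrdConnected)
    (hpos : s ⊆ Set.Ioi 0)
    (hsing : ∀ k ∈ s, ∀ n : ℕ, 0 < n → t - k ^ 2 ≠ (n : ℝ) ^ 2 * Real.pi ^ 2) :
    StrictMonoOn (fun k => hFun t k) s :=
  hFun_strictMono_in_k_general t s hs hpos hsing
end

section
/- Suppose t₀ > k₁² and t₀ > k₂² with k₁ ≠ k₂, t₀−k₁² ∉ π²ℤ₊², t₀−k₂² ∉ π²ℤ₊², and f(t₀) = 0 where f(t) = √(t−k₁²)·cot(√(t−k₁²)) − √(t−k₂²)·cot(√(t−k₂²)). Then f′(t₀) = (k₂²−k₁²)·h·(h−1) / (2(t₀−k₂²)(t₀−k₁²)), where h = √(t₀−k₁²)·cot(√(t₀−k₁²)). -/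
/-!
With `u = t - k²` and `h = √u · cot √u`, the chain rule and `csc² = 1 + cot²` give the Riccati
equation `2u · dh/dt = h - h² - u`. At a common zero of the difference the two values of `h`
agree, so the terms `-u / (2u) = -1/2` cancel and what remains is
`(h - h²) (1/(2u₁) - 1/(2u₂))`.
-/

open Real

/-- The paper's `h(t; k)` for `c = k²`. -/
noncomputable def sqrtCot (c t : ℝ) : ℝ :=
  √(t - c) * (cos √(t - c) / sin √(t - c))

lemma Real.sin_sqrt_ne_zero {u : ℝ} (hu : 0 < u)
    (hs : ∀ n : ℕ, 0 < n → u ≠ (n : ℝ) ^ 2 * π ^ 2) : sin √u ≠ 0 := by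
  intro hsin
  obtain ⟨n, hn⟩ := sin_eq_zero_iff.mp hsin
  have hn_pos : 0 < n := by
    have : (0 : ℝ) < n * π := hn ▸ sqrt_pos.mpr hu
    exact_mod_cast pos_of_mul_pos_left this pi_pos.le
  refine hs n.toNat (by omega) ?_
  have hcast : ((n.toNat : ℕ) : ℝ) = n := by exact_mod_cast Int.toNat_of_nonneg hn_pos.le
  rw [hcast, ← mul_pow, hn, sq_sqrt hu.le]

lemma hasDerivAt_mul_cos_div_sin {x : ℝ} (hx : sin x ≠ 0) :
    HasDerivAt (fun y ↦ y * (cos y / sin y)) (cos x / sin x - x / sin x ^ 2) x := by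
  refine ((hasDerivAt_id x).mul ((hasDerivAt_cos x).div (hasDerivAt_sin x) hx)).congr_deriv ?_
  simp only [id, Pi.div_apply]
  field_simp
  linear_combination -x * sin_sq_add_cos_sq x

lemma hasDerivAt_sqrtCot {c t : ℝ} (hu : 0 < t - c) (hsin : sin √(t - c) ≠ 0) :
    HasDerivAt (sqrtCot c)
      ((sqrtCot c t - sqrtCot c t ^ 2 - (t - c)) / (2 * (t - c))) t := by
  have hsqrt : HasDerivAt (fun t ↦ √(t - c)) (1 / (2 * √(t - c))) t := by
    simpa using ((hasDerivAt_id t).sub_const c).sqrt hu.ne'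
  refine ((hasDerivAt_mul_cos_div_sin hsin).comp t hsqrt).congr_deriv ?_
  rw [sqrtCot]
  set s := √(t - c)
  have hs_pos : 0 < s := sqrt_pos.mpr hu
  have hs_sq : s ^ 2 = t - c := sq_sqrt hu.le
  rw [← hs_sq]
  field_simp
  linear_combination s * sin_sq_add_cos_sq s

theorem deriv_f_at_zero_general (k₁ k₂ t₀ : ℝ)
    (h₁ : k₁ ^ 2 < t₀) (h₂ : k₂ ^ 2 < t₀)
    (hs₁ : ∀ n : ℕ, 0 < n → t₀ - k₁ ^ 2 ≠ (n : ℝ) ^ 2 * Real.pi ^ 2)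
    (hs₂ : ∀ n : ℕ, 0 < n → t₀ - k₂ ^ 2 ≠ (n : ℝ) ^ 2 * Real.pi ^ 2)
    (hzero :
      Real.sqrt (t₀ - k₁ ^ 2) *
          (Real.cos (Real.sqrt (t₀ - k₁ ^ 2)) / Real.sin (Real.sqrt (t₀ - k₁ ^ 2))) -
        Real.sqrt (t₀ - k₂ ^ 2) *
          (Real.cos (Real.sqrt (t₀ - k₂ ^ 2)) / Real.sin (Real.sqrt (t₀ - k₂ ^ 2))) = 0) :
    HasDerivAt
      (fun t : ℝ =>
        Real.sqrt (t - k₁ ^ 2) *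
            (Real.cos (Real.sqrt (t - k₁ ^ 2)) / Real.sin (Real.sqrt (t - k₁ ^ 2))) -
          Real.sqrt (t - k₂ ^ 2) *
            (Real.cos (Real.sqrt (t - k₂ ^ 2)) / Real.sin (Real.sqrt (t - k₂ ^ 2))))
      ((k₂ ^ 2 - k₁ ^ 2) *
          (Real.sqrt (t₀ - k₁ ^ 2) *
            (Real.cos (Real.sqrt (t₀ - k₁ ^ 2)) / Real.sin (Real.sqrt (t₀ - k₁ ^ 2)))) *
          ((Real.sqrt (t₀ - k₁ ^ 2) *
              (Real.cos (Real.sqrt (t₀ - k₁ ^ 2)) / Real.sin (Real.sqrt (t₀ - k₁ ^ 2)))) - 1) /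
        (2 * (t₀ - k₂ ^ 2) * (t₀ - k₁ ^ 2))) t₀ := by
  have hu₁ : 0 < t₀ - k₁ ^ 2 := sub_pos.mpr h₁
  have hu₂ : 0 < t₀ - k₂ ^ 2 := sub_pos.mpr h₂
  have hderiv := (hasDerivAt_sqrtCot hu₁ (sin_sqrt_ne_zero hu₁ hs₁)).sub
    (hasDerivAt_sqrtCot hu₂ (sin_sqrt_ne_zero hu₂ hs₂))
  have hh : sqrtCot (k₂ ^ 2) t₀ = sqrtCot (k₁ ^ 2) t₀ := (sub_eq_zero.mp hzero).symm
  refine hderiv.congr_deriv ?_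
  change _ = (k₂ ^ 2 - k₁ ^ 2) * sqrtCot (k₁ ^ 2) t₀ * (sqrtCot (k₁ ^ 2) t₀ - 1) / _
  rw [hh]
  field_simp
  ring

/-- Derivative formula for `f(t) = √(t−k₁²)·cot(√(t−k₁²)) − √(t−k₂²)·cot(√(t−k₂²))`
at a zero `t₀` of `f`. -/
theorem deriv_f_at_zero (k₁ k₂ t₀ : ℝ) (hk₁ : 0 < k₁) (hk₂ : 0 < k₂) (hne : k₁ ≠ k₂)
    (h₁ : k₁ ^ 2 < t₀) (h₂ : k₂ ^ 2 < t₀)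
    (hs₁ : ∀ n : ℕ, 0 < n → t₀ - k₁ ^ 2 ≠ (n : ℝ) ^ 2 * Real.pi ^ 2)
    (hs₂ : ∀ n : ℕ, 0 < n → t₀ - k₂ ^ 2 ≠ (n : ℝ) ^ 2 * Real.pi ^ 2)
    (hzero :
      Real.sqrt (t₀ - k₁ ^ 2) *
          (Real.cos (Real.sqrt (t₀ - k₁ ^ 2)) / Real.sin (Real.sqrt (t₀ - k₁ ^ 2))) -
        Real.sqrt (t₀ - k₂ ^ 2) *
          (Real.cos (Real.sqrt (t₀ - k₂ ^ 2)) / Real.sin (Real.sqrt (t₀ - k₂ ^ 2))) = 0) :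
    HasDerivAt
      (fun t : ℝ =>
        Real.sqrt (t - k₁ ^ 2) *
            (Real.cos (Real.sqrt (t - k₁ ^ 2)) / Real.sin (Real.sqrt (t - k₁ ^ 2))) -
          Real.sqrt (t - k₂ ^ 2) *
            (Real.cos (Real.sqrt (t - k₂ ^ 2)) / Real.sin (Real.sqrt (t - k₂ ^ 2))))
      ((k₂ ^ 2 - k₁ ^ 2) *
          (Real.sqrt (t₀ - k₁ ^ 2) *
            (Real.cos (Real.sqrt (t₀ - k₁ ^ 2)) / Real.sin (Real.sqrt (t₀ - k₁ ^ 2)))) *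
          ((Real.sqrt (t₀ - k₁ ^ 2) *
              (Real.cos (Real.sqrt (t₀ - k₁ ^ 2)) / Real.sin (Real.sqrt (t₀ - k₁ ^ 2)))) - 1) /
        (2 * (t₀ - k₂ ^ 2) * (t₀ - k₁ ^ 2))) t₀ :=
  deriv_f_at_zero_general k₁ k₂ t₀ h₁ h₂ hs₁ hs₂ hzero
end

section
/- Let k₁, k₂ be positive integers with k₂² > k₁² + 3π² and k₂² − k₁² ≠ (2n+1)π² for all integers n. Then there exists t₀ > k₂² such that √(t₀−k₁²)·cot(√(t₀−k₁²)) = √(t₀−k₂²)·cot(√(t₀−k₂²)), with both sides well-defined (the arguments of cot are not multiples of π). -/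
/-!
Write `D = k₂² − k₁²` and substitute `t = k₂² + x²`; the claim becomes
`√(x² + D) cot √(x² + D) = x cot x` for some `x > 0`. Choose `n ≥ 1` with
`(2n+1)π² < D < (2n+3)π²`. For `x ∈ [nπ, (n+1)π]` this forces `√(x² + D) ∈ ((n+1)π, (n+2)π)`,
so the left side is continuous there, while `x cot x` runs through all of `ℝ`. Multiplying by
`sin x` gives a function continuous on the closed interval whose endpoint values
`−nπ(−1)ⁿ` and `(n+1)π(−1)ⁿ` have opposite signs, and the intermediate value theorem applies.
-/

open Real Set

theorem exists_mem_Ioo_eq_zero_of_mul_neg {α : Type*} [ConditionallyCompleteLinearOrder α]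
    [TopologicalSpace α] [OrderTopology α] [DenselyOrdered α] {a b : α} {f : α → ℝ}
    (hab : a ≤ b) (hf : ContinuousOn f (Icc a b)) (h : f a * f b < 0) :
    ∃ x ∈ Ioo a b, f x = 0 := by
  rcases mul_neg_iff.1 h with ⟨ha, hb⟩ | ⟨ha, hb⟩
  · exact intermediate_value_Ioo' hab hf ⟨hb, ha⟩
  · exact intermediate_value_Ioo hab hf ⟨ha, hb⟩

theorem exists_nat_odd_mul_lt_lt {c D : ℝ} (hc : 0 < c) (hD : c < D)
    (hodd : ∀ n : ℤ, D ≠ (2 * (n : ℝ) + 1) * c) :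
    ∃ n : ℕ, (2 * (n : ℝ) + 1) * c < D ∧ D < (2 * (n : ℝ) + 3) * c := by
  set n := ⌊(D / c - 1) / 2⌋₊
  have hr : 1 < D / c := (one_lt_div hc).2 hD
  have hle : (n : ℝ) ≤ (D / c - 1) / 2 := Nat.floor_le (by linarith)
  have hlt : (D / c - 1) / 2 < n + 1 := Nat.lt_floor_add_one _
  have hne : (2 * (n : ℝ) + 1) * c ≠ D := by exact_mod_cast (hodd n).symm
  refine ⟨n, lt_of_le_of_ne ?_ hne, ?_⟩
  · rw [← le_div_iff₀ hc]; linarith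
  · rw [← div_lt_iff₀ hc]; linarith

theorem Real.sin_ne_zero_of_nat_mul_pi_lt {x : ℝ} {n : ℕ} (h₁ : n * π < x)
    (h₂ : x < (n + 1) * π) : sin x ≠ 0 := by
  rw [sin_ne_zero_iff]
  rintro m rfl
  have h₁' : (n : ℝ) < m := lt_of_mul_lt_mul_right h₁ pi_pos.le
  have h₂' : (m : ℝ) < n + 1 := lt_of_mul_lt_mul_right h₂ pi_pos.le
  norm_cast at h₁' h₂'
  omega

theorem Real.mul_sin_sub_mul_cos_nat_mul_pi (c : ℝ) (m : ℕ) :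
    c * sin (m * π) - m * π * cos (m * π) = -(m * π * (-1) ^ m) := by
  rw [sin_nat_mul_pi, cos_nat_mul_pi]
  ring

section

variable {n : ℕ} {D : ℝ}

theorem sqrt_sq_add_mem_Ioo (hlo : (2 * (n : ℝ) + 1) * π ^ 2 < D)
    (hhi : D < (2 * (n : ℝ) + 3) * π ^ 2) {x : ℝ} (hx : x ∈ Icc (n * π) ((n + 1) * π)) :
    (n + 1) * π < √(x ^ 2 + D) ∧ √(x ^ 2 + D) < (n + 1 + 1) * π := by
  have hx₀ : 0 ≤ x := le_trans (by positivity) hx.1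
  have hsq₁ : (n * π) ^ 2 ≤ x ^ 2 := pow_le_pow_left₀ (by positivity) hx.1 2
  have hsq₂ : x ^ 2 ≤ ((n + 1) * π) ^ 2 := pow_le_pow_left₀ hx₀ hx.2 2
  constructor
  · rw [lt_sqrt (by positivity)]
    nlinarith
  · rw [sqrt_lt' (by positivity)]
    nlinarith

theorem exists_sqrt_sq_add_mul_cot_eq (hn : 0 < n) (hlo : (2 * (n : ℝ) + 1) * π ^ 2 < D)
    (hhi : D < (2 * (n : ℝ) + 3) * π ^ 2) :
    ∃ x : ℝ, 0 < x ∧ sin x ≠ 0 ∧ sin √(x ^ 2 + D) ≠ 0 ∧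
      √(x ^ 2 + D) * (cos √(x ^ 2 + D) / sin √(x ^ 2 + D)) = x * (cos x / sin x) := by
  have hsin : ∀ x ∈ Icc (n * π) ((n + 1) * π), sin √(x ^ 2 + D) ≠ 0 := fun x hx => by
    obtain ⟨h₁, h₂⟩ := sqrt_sq_add_mem_Ioo hlo hhi hx
    exact sin_ne_zero_of_nat_mul_pi_lt (n := n + 1) (by push_cast; exact h₁) (by push_cast; exact h₂)
  set G : ℝ → ℝ := fun x =>
    √(x ^ 2 + D) * (cos √(x ^ 2 + D) / sin √(x ^ 2 + D)) * sin x - x * cos x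
  have hG : ContinuousOn G (Icc (n * π) ((n + 1) * π)) := by
    fun_prop (disch := exact hsin)
  have hsign : G (n * π) * G ((n + 1) * π) < 0 := by
    simp only [G]
    rw [← Nat.cast_succ, mul_sin_sub_mul_cos_nat_mul_pi, mul_sin_sub_mul_cos_nat_mul_pi]
    push_cast
    have hsq : ((-1 : ℝ) ^ n) ^ 2 = 1 := by rw [← pow_mul, mul_comm, pow_mul]; norm_num
    have : 0 < (n : ℝ) * π * ((n + 1) * π) := by positivity
    rw [pow_succ]
    linear_combination (-((n : ℝ) * π * ((n + 1) * π))) * hsq + this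
  obtain ⟨x, hx, hGx⟩ := exists_mem_Ioo_eq_zero_of_mul_neg (by gcongr; linarith) hG hsign
  have hsx : sin x ≠ 0 := sin_ne_zero_of_nat_mul_pi_lt hx.1 hx.2
  refine ⟨x, lt_of_le_of_lt (by positivity) hx.1, hsx, hsin x (Ioo_subset_Icc_self hx), ?_⟩
  rw [← mul_div_assoc x, eq_div_iff hsx]
  exact sub_eq_zero.1 hGx
end

theorem exists_t0_two_dim_general (k₁ k₂ : ℕ)
    (hgap : (k₁ : ℝ) ^ 2 + 3 * Real.pi ^ 2 < (k₂ : ℝ) ^ 2)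
    (hodd : ∀ n : ℤ, (k₂ : ℝ) ^ 2 - (k₁ : ℝ) ^ 2 ≠ (2 * (n : ℝ) + 1) * Real.pi ^ 2) :
    ∃ t₀ : ℝ, (k₂ : ℝ) ^ 2 < t₀ ∧
      (∀ m : ℤ, Real.sqrt (t₀ - (k₁ : ℝ) ^ 2) ≠ (m : ℝ) * Real.pi) ∧
      (∀ m : ℤ, Real.sqrt (t₀ - (k₂ : ℝ) ^ 2) ≠ (m : ℝ) * Real.pi) ∧
      Real.sqrt (t₀ - (k₁ : ℝ) ^ 2) *
          (Real.cos (Real.sqrt (t₀ - (k₁ : ℝ) ^ 2)) / Real.sin (Real.sqrt (t₀ - (k₁ : ℝ) ^ 2))) =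
        Real.sqrt (t₀ - (k₂ : ℝ) ^ 2) *
          (Real.cos (Real.sqrt (t₀ - (k₂ : ℝ) ^ 2)) / Real.sin (Real.sqrt (t₀ - (k₂ : ℝ) ^ 2))) := by
  set D := (k₂ : ℝ) ^ 2 - (k₁ : ℝ) ^ 2
  have hπ : 0 < π ^ 2 := by positivity
  obtain ⟨n, hlo, hhi⟩ := exists_nat_odd_mul_lt_lt hπ (by linarith) hodd
  have hn : 0 < n := Nat.pos_of_ne_zero fun h => by subst h; norm_num at hhi; linarith
  obtain ⟨x, hx, hsx, hsy, heq⟩ := exists_sqrt_sq_add_mul_cot_eq hn hlo hhi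
  have h₁ : (k₂ : ℝ) ^ 2 + x ^ 2 - k₁ ^ 2 = x ^ 2 + D := by ring
  have h₂ : √((k₂ : ℝ) ^ 2 + x ^ 2 - k₂ ^ 2) = x := by rw [add_sub_cancel_left, sqrt_sq hx.le]
  refine ⟨k₂ ^ 2 + x ^ 2, lt_add_of_pos_right _ (pow_pos hx 2), ?_, ?_, ?_⟩ <;>
    simp only [h₁, h₂]
  · exact fun m => (sin_ne_zero_iff.1 hsy m).symm
  · exact fun m => (sin_ne_zero_iff.1 hsx m).symm
  · exact heq

/-- For positive integers `k₁, k₂` with `k₂² > k₁² + 3π²` and `k₂² − k₁² ≠ (2n+1)π²` for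
all integers `n`, there exists `t₀ > k₂²` where the two trigonometric dispersion curves meet,
with both arguments of `cot` avoiding multiples of `π`. -/
theorem exists_t0_two_dim (k₁ k₂ : ℕ) (hk₁ : 0 < k₁) (hk₂ : 0 < k₂)
    (hgap : (k₁ : ℝ) ^ 2 + 3 * Real.pi ^ 2 < (k₂ : ℝ) ^ 2)
    (hodd : ∀ n : ℤ, (k₂ : ℝ) ^ 2 - (k₁ : ℝ) ^ 2 ≠ (2 * (n : ℝ) + 1) * Real.pi ^ 2) :
    ∃ t₀ : ℝ, (k₂ : ℝ) ^ 2 < t₀ ∧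
      (∀ m : ℤ, Real.sqrt (t₀ - (k₁ : ℝ) ^ 2) ≠ (m : ℝ) * Real.pi) ∧
      (∀ m : ℤ, Real.sqrt (t₀ - (k₂ : ℝ) ^ 2) ≠ (m : ℝ) * Real.pi) ∧
      Real.sqrt (t₀ - (k₁ : ℝ) ^ 2) *
          (Real.cos (Real.sqrt (t₀ - (k₁ : ℝ) ^ 2)) / Real.sin (Real.sqrt (t₀ - (k₁ : ℝ) ^ 2))) =
        Real.sqrt (t₀ - (k₂ : ℝ) ^ 2) *
          (Real.cos (Real.sqrt (t₀ - (k₂ : ℝ) ^ 2)) / Real.sin (Real.sqrt (t₀ - (k₂ : ℝ) ^ 2))) :=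
  exists_t0_two_dim_general k₁ k₂ hgap hodd
end

section
/- Let k₁, k₂ be positive reals with k₂² ≥ k₁² + (9/4)π². Then there exists t with π² < t − k₁² < (3π/2)² such that √(t−k₁²)·cot(√(t−k₁²)) = √(k₂²−t)·coth(√(k₂²−t)), and moreover this common value lies in (1, k₂·coth(k₂)). -/
open Real Set

/-- `sinh y < y * cosh y` for `y > 0`. -/
lemma aux_sinh_lt (y : ℝ) (hy : 0 < y) : Real.sinh y < y * Real.cosh y := by
  have h : StrictMonoOn (fun z : ℝ => z * Real.cosh z - Real.sinh z) (Set.Ici 0) := by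
    apply strictMonoOn_of_deriv_pos (convex_Ici 0)
    · fun_prop
    · intro z hz
      rw [interior_Ici] at hz
      have hz' : (0:ℝ) < z := hz
      have hd : HasDerivAt (fun z : ℝ => z * Real.cosh z - Real.sinh z)
          (1 * Real.cosh z + z * Real.sinh z - Real.cosh z) z :=
        ((hasDerivAt_id z).mul (Real.hasDerivAt_cosh z)).sub (Real.hasDerivAt_sinh z)
      rw [hd.deriv]
      have : 0 < Real.sinh z := Real.sinh_pos_iff.2 hz
      nlinarith
  have := h (Set.self_mem_Ici) (Set.mem_Ici.2 hy.le) hy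
  simpa using this

/-- `1 < y * (cosh y / sinh y)` for `y > 0`. -/
lemma aux_one_lt (y : ℝ) (hy : 0 < y) : 1 < y * (Real.cosh y / Real.sinh y) := by
  have hs : 0 < Real.sinh y := Real.sinh_pos_iff.2 hy
  rw [mul_div_assoc'] ; exact (one_lt_div hs).2 (aux_sinh_lt y hy)

/-- `y ↦ y * cosh y / sinh y` is strictly increasing on positives. -/
lemma aux_mono {y k : ℝ} (hy : 0 < y) (hyk : y < k) :
    y * (Real.cosh y / Real.sinh y) < k * (Real.cosh k / Real.sinh k) := by
  have h : StrictMonoOn (fun z : ℝ => z * Real.cosh z / Real.sinh z) (Set.Ici y) := by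
    apply strictMonoOn_of_deriv_pos (convex_Ici y)
    · apply ContinuousOn.div (by fun_prop) (by fun_prop)
      intro z hz
      exact (Real.sinh_pos_iff.2 (hy.trans_le hz)).ne'
    · intro z hz
      rw [interior_Ici] at hz
      have hz0 : 0 < z := hy.trans hz
      have hs : 0 < Real.sinh z := Real.sinh_pos_iff.2 hz0
      have hd : HasDerivAt (fun z : ℝ => z * Real.cosh z / Real.sinh z)
          (((1 * Real.cosh z + z * Real.sinh z) * Real.sinh z -
            z * Real.cosh z * Real.cosh z) / Real.sinh z ^ 2) z :=
        ((hasDerivAt_id z).mul (Real.hasDerivAt_cosh z)).div (Real.hasDerivAt_sinh z) hs.ne'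
      rw [hd.deriv]
      apply div_pos _ (by positivity)
      have h2 : 2 * z < Real.sinh (2 * z) := Real.self_lt_sinh_iff.2 (by linarith)
      rw [Real.sinh_two_mul] at h2
      have hcs : Real.cosh z ^ 2 - Real.sinh z ^ 2 = 1 := Real.cosh_sq_sub_sinh_sq z
      nlinarith
  have := h (Set.self_mem_Ici) (Set.mem_Ici.2 hyk.le) hyk
  simp only [mul_div_assoc] at this ⊢
  exact this

lemma aux_div {q ε Mv : ℝ} (hq : 1/2 ≤ q * ε) (hεM : ε * Mv ≤ 1) (hε0 : 0 < ε) :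
    Mv ≤ 2 * q := by nlinarith

set_option maxHeartbeats 1000000 in
/-- For positive `k₁, k₂` with `k₂² ≥ k₁² + (9/4)π²`, there exists `t` with
`π² < t − k₁² < (3π/2)²` at which `√(t−k₁²)·cot(√(t−k₁²)) = √(k₂²−t)·coth(√(k₂²−t))`,
the common value lying in `(1, k₂·coth k₂)`. -/
theorem exists_t_mixed (k₁ k₂ : ℝ) (hk₁ : 0 < k₁) (hk₂ : 0 < k₂)
    (hgap : k₁ ^ 2 + (9 / 4) * Real.pi ^ 2 ≤ k₂ ^ 2) :
    ∃ t : ℝ, Real.pi ^ 2 < t - k₁ ^ 2 ∧ t - k₁ ^ 2 < (3 * Real.pi / 2) ^ 2 ∧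
      Real.sqrt (t - k₁ ^ 2) *
          (Real.cos (Real.sqrt (t - k₁ ^ 2)) / Real.sin (Real.sqrt (t - k₁ ^ 2))) =
        Real.sqrt (k₂ ^ 2 - t) *
          (Real.cosh (Real.sqrt (k₂ ^ 2 - t)) / Real.sinh (Real.sqrt (k₂ ^ 2 - t))) ∧
      Real.sqrt (t - k₁ ^ 2) *
          (Real.cos (Real.sqrt (t - k₁ ^ 2)) / Real.sin (Real.sqrt (t - k₁ ^ 2))) ∈
        Set.Ioo 1 (k₂ * (Real.cosh k₂ / Real.sinh k₂)) := by
  have hπ3 : (3.141592 : ℝ) < π := Real.pi_gt_d6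
  have hπ4 : π < 3.1416 := by
    have := Real.pi_lt_d6
    linarith
  set c := k₂ ^ 2 - k₁ ^ 2 with hc
  have hcge : (3 * π / 2) ^ 2 ≤ c := by rw [hc]; nlinarith
  set M := k₂ * (Real.cosh k₂ / Real.sinh k₂) with hM
  have hM1 : 1 < M := aux_one_lt k₂ hk₂
  have hM0 : 0 < M := by linarith
  set ε := min 1 (1 / M) with hε
  have hε0 : 0 < ε := lt_min one_pos (by positivity)
  have hε1 : ε ≤ 1 := min_le_left _ _
  have hεM : ε * M ≤ 1 := by
    have h1 : ε ≤ 1 / M := min_le_right _ _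
    calc ε * M ≤ (1 / M) * M := by nlinarith
      _ = 1 := by field_simp
  set a := π + ε with ha
  set b := 3 * π / 2 - 1 / 10 with hb
  have hab : a < b := by rw [ha, hb]; linarith
  have hmem : ∀ x ∈ Set.Icc a b, π < x ∧ x < 3 * π / 2 := by
    intro x hx
    constructor
    · calc π < a := by rw [ha]; linarith
        _ ≤ x := hx.1
    · calc x ≤ b := hx.2
        _ < 3 * π / 2 := by rw [hb]; linarith
  have hsin : ∀ x ∈ Set.Icc a b, Real.sin x < 0 := by
    intro x hx
    obtain ⟨h1, h2⟩ := hmem x hx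
    have e : Real.sin (x - π + π) = -Real.sin (x - π) := Real.sin_add_pi _
    rw [sub_add_cancel] at e
    rw [e, neg_lt_zero]
    exact Real.sin_pos_of_pos_of_lt_pi (by linarith) (by linarith)
  have hcx : ∀ x ∈ Set.Icc a b, 0 < c - x ^ 2 := by
    intro x hx
    obtain ⟨h1, h2⟩ := hmem x hx
    nlinarith [hcge]
  set g := fun x : ℝ => x * (Real.cos x / Real.sin x) -
    Real.sqrt (c - x ^ 2) *
      (Real.cosh (Real.sqrt (c - x ^ 2)) / Real.sinh (Real.sqrt (c - x ^ 2))) with hg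
  have hgcont : ContinuousOn g (Set.Icc a b) := by
    apply ContinuousOn.sub
    · exact continuousOn_id.mul (Real.continuous_cos.continuousOn.div
        Real.continuous_sin.continuousOn (fun x hx => (hsin x hx).ne))
    · have hu : Continuous (fun x : ℝ => Real.sqrt (c - x ^ 2)) := by fun_prop
      apply hu.continuousOn.mul
      apply ContinuousOn.div (Real.continuous_cosh.comp hu).continuousOn
        (Real.continuous_sinh.comp hu).continuousOn
      intro x hx
      have : 0 < Real.sqrt (c - x ^ 2) := Real.sqrt_pos.2 (hcx x hx)
      exact (Real.sinh_pos_iff.2 this).ne'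
  have hhval : ∀ x ∈ Set.Icc a b,
      1 < Real.sqrt (c - x ^ 2) *
        (Real.cosh (Real.sqrt (c - x ^ 2)) / Real.sinh (Real.sqrt (c - x ^ 2))) ∧
      Real.sqrt (c - x ^ 2) *
        (Real.cosh (Real.sqrt (c - x ^ 2)) / Real.sinh (Real.sqrt (c - x ^ 2))) < M := by
    intro x hx
    have hy0 : 0 < Real.sqrt (c - x ^ 2) := Real.sqrt_pos.2 (hcx x hx)
    have hyk : Real.sqrt (c - x ^ 2) < k₂ := by
      have h1 := (hmem x hx).1
      have hlt : c - x ^ 2 < k₂ ^ 2 := by rw [hc]; nlinarith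
      calc Real.sqrt (c - x ^ 2) < Real.sqrt (k₂ ^ 2) :=
            Real.sqrt_lt_sqrt (hcx x hx).le hlt
        _ = k₂ := Real.sqrt_sq hk₂.le
    exact ⟨aux_one_lt _ hy0, aux_mono hy0 hyk⟩
  have hamem : a ∈ Set.Icc a b := ⟨le_refl a, hab.le⟩
  have hbmem : b ∈ Set.Icc a b := ⟨hab.le, le_refl b⟩
  have hga : 0 < g a := by
    have hcos : Real.cos a = -Real.cos ε := by
      rw [show a = ε + π by rw [ha]; ring, Real.cos_add_pi]
    have hsina : Real.sin a = -Real.sin ε := by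
      rw [show a = ε + π by rw [ha]; ring, Real.sin_add_pi]
    have hsε : 0 < Real.sin ε := Real.sin_pos_of_pos_of_lt_pi hε0 (by linarith)
    have hsεle : Real.sin ε < ε := Real.sin_lt hε0
    have hcε : 1 / 2 ≤ Real.cos ε := by
      have := Real.one_sub_sq_div_two_le_cos (x := ε)
      nlinarith
    have hq : 1 / 2 ≤ (Real.cos a / Real.sin a) * ε := by
      rw [hcos, hsina, neg_div_neg_eq]
      rw [div_mul_eq_mul_div, le_div_iff₀ hsε]
      have h1 : (1/2) * ε ≤ Real.cos ε * ε := mul_le_mul_of_nonneg_right hcε hε0.le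
      linarith
    have hq0 : 0 < Real.cos a / Real.sin a := by
      rw [hcos, hsina, neg_div_neg_eq]
      positivity
    have hcot : M * (3 / 2) ≤ a * (Real.cos a / Real.sin a) := by
      have ha3 : (3:ℝ) ≤ a := by rw [ha]; linarith
      have hM2 : M ≤ 2 * (Real.cos a / Real.sin a) := aux_div hq hεM hε0
      have h3 : 3 * (Real.cos a / Real.sin a) ≤ a * (Real.cos a / Real.sin a) :=
        mul_le_mul_of_nonneg_right ha3 hq0.le
      linarith
    have := (hhval a hamem).2
    rw [hg]
    simp only
    linarith
  have hgb : g b < 0 := by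
    have hcos : Real.cos b = -Real.sin (1 / 10) := by
      rw [show b = (π / 2 - 1 / 10) + π by rw [hb]; ring, Real.cos_add_pi,
        Real.cos_pi_div_two_sub]
    have hsinb : Real.sin b = -Real.cos (1 / 10) := by
      rw [show b = (π / 2 - 1 / 10) + π by rw [hb]; ring, Real.sin_add_pi,
        Real.sin_pi_div_two_sub]
    have hs1 : 0 < Real.sin (1 / 10) := Real.sin_pos_of_pos_of_lt_pi (by norm_num) (by linarith)
    have hs2 : Real.sin (1 / 10) < 1 / 10 := Real.sin_lt (by norm_num)
    have hc1 : (9:ℝ) / 10 ≤ Real.cos (1 / 10) := by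
      have := Real.one_sub_sq_div_two_le_cos (x := (1/10 : ℝ))
      nlinarith
    have hcot : b * (Real.cos b / Real.sin b) < 1 := by
      rw [hcos, hsinb, neg_div_neg_eq]
      have hcpos : (0:ℝ) < Real.cos (1 / 10) := by linarith
      have hqlt : Real.sin (1 / 10) / Real.cos (1 / 10) < 1 / 9 := by
        rw [div_lt_iff₀ hcpos]; nlinarith
      have hq0 : 0 ≤ Real.sin (1 / 10) / Real.cos (1 / 10) := by positivity
      have hblt : b < 19 / 4 := by rw [hb]; linarith
      have hb0 : 0 < b := by rw [hb]; linarith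
      have h2 := mul_lt_mul_of_pos_left hqlt hb0
      have h3 : b * (1/9) < (19/4) * (1/9) := by linarith
      linarith
    have := (hhval b hbmem).1
    rw [hg]
    simp only
    linarith
  have key : (0:ℝ) ∈ Set.Icc (g b) (g a) := ⟨hgb.le, hga.le⟩
  obtain ⟨x₀, hx₀mem, hgx₀⟩ := intermediate_value_Icc' hab.le hgcont key
  obtain ⟨hx₀1, hx₀2⟩ := hmem x₀ hx₀mem
  have hx₀0 : 0 < x₀ := by linarith
  have e : k₁ ^ 2 + x₀ ^ 2 - k₁ ^ 2 = x₀ ^ 2 := by ring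
  have e2 : k₂ ^ 2 - (k₁ ^ 2 + x₀ ^ 2) = c - x₀ ^ 2 := by rw [hc]; ring
  have es : Real.sqrt (k₁ ^ 2 + x₀ ^ 2 - k₁ ^ 2) = x₀ := by rw [e, Real.sqrt_sq hx₀0.le]
  have heq : x₀ * (Real.cos x₀ / Real.sin x₀) =
      Real.sqrt (c - x₀ ^ 2) *
        (Real.cosh (Real.sqrt (c - x₀ ^ 2)) / Real.sinh (Real.sqrt (c - x₀ ^ 2))) := by
    have h0 : g x₀ = 0 := hgx₀
    rw [hg] at h0
    simp only at h0
    linarith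
  refine ⟨k₁ ^ 2 + x₀ ^ 2, ?_, ?_, ?_, ?_⟩
  · rw [e]; nlinarith
  · rw [e]; nlinarith
  · rw [es, e2, heq]
  · rw [es, heq]
    exact ⟨(hhval x₀ hx₀mem).1, (hhval x₀ hx₀mem).2⟩
end

section
/- If θ₁, θ₂ > 0 satisfy θ₁·cot(θ₁) = θ₂·cot(θ₂) = a with a ∉ {0,1}, sin(θ₁) ≠ 0, sin(θ₂) ≠ 0, and sin²(θ₁) ≠ sin²(θ₂), then (sin²(θ₁)/θ₁²)·f(θ₂) − (sin²(θ₂)/θ₂²)·f(θ₁) ≠ 0, where f(θ) = (π/2)·(cos(θ)sin(θ) − θ)/θ³. -/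
/-!
Put `s = sin² θ`. The relation `θ cot θ = a` gives `θ cos θ = a sin θ`, hence
`f(θ) = (π/2)(a s - θ²)/θ⁴` and, squaring, `a² s = θ² (1 - s)`. Substituting both, the
determinant collapses to `π (1 - a)(s₁ - s₂) / (2 a θ₁² θ₂²)`, whose factors are all nonzero.
-/

open Real

section
variable {θ a : ℝ}

theorem mul_cos_eq_of_mul_cot_eq (hs : sin θ ≠ 0) (h : θ * (cos θ / sin θ) = a) :
    θ * cos θ = a * sin θ := by
  rw [← h]
  field_simp

theorem sq_mul_sin_sq_eq (h : θ * cos θ = a * sin θ) :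
    a ^ 2 * sin θ ^ 2 = θ ^ 2 * (1 - sin θ ^ 2) := by
  linear_combination -(θ * cos θ + a * sin θ) * h + θ ^ 2 * sin_sq_add_cos_sq θ

theorem pi_div_two_mul_cos_mul_sin_sub_div (hθ : θ ≠ 0) (h : θ * cos θ = a * sin θ) :
    π / 2 * (cos θ * sin θ - θ) / θ ^ 3 = π / 2 * (a * sin θ ^ 2 - θ ^ 2) / θ ^ 4 := by
  field_simp
  linear_combination sin θ * h

end

theorem det_eq_of_sq_mul_eq {K : Type*} [Field K] {x₁ x₂ s₁ s₂ a : K}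
    (hx₁ : x₁ ≠ 0) (hx₂ : x₂ ≠ 0) (ha : a ≠ 0)
    (h₁ : a ^ 2 * s₁ = x₁ ^ 2 * (1 - s₁)) (h₂ : a ^ 2 * s₂ = x₂ ^ 2 * (1 - s₂)) :
    s₁ / x₁ ^ 2 * ((a * s₂ - x₂ ^ 2) / x₂ ^ 4) - s₂ / x₂ ^ 2 * ((a * s₁ - x₁ ^ 2) / x₁ ^ 4) =
      (1 - a) * (s₁ - s₂) / (a * x₁ ^ 2 * x₂ ^ 2) := by
  field_simp
  linear_combination (x₁ ^ 2 * s₁) * h₂ - (x₂ ^ 2 * s₂) * h₁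

/-- Case I nondegeneracy: the determinant expression is nonzero when `a ∉ {0,1}` and
`sin² θ₁ ≠ sin² θ₂`. -/
theorem caseI_nonzero (θ₁ θ₂ a : ℝ) (h₁ : 0 < θ₁) (h₂ : 0 < θ₂)
    (hs₁ : Real.sin θ₁ ≠ 0) (hs₂ : Real.sin θ₂ ≠ 0)
    (ha₁ : θ₁ * (Real.cos θ₁ / Real.sin θ₁) = a)
    (ha₂ : θ₂ * (Real.cos θ₂ / Real.sin θ₂) = a)
    (ha0 : a ≠ 0) (ha1 : a ≠ 1)
    (hsin : Real.sin θ₁ ^ 2 ≠ Real.sin θ₂ ^ 2) :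
    (Real.sin θ₁ ^ 2 / θ₁ ^ 2) *
        ((Real.pi / 2) * (Real.cos θ₂ * Real.sin θ₂ - θ₂) / θ₂ ^ 3) -
      (Real.sin θ₂ ^ 2 / θ₂ ^ 2) *
        ((Real.pi / 2) * (Real.cos θ₁ * Real.sin θ₁ - θ₁) / θ₁ ^ 3) ≠ 0 := by
  have hc₁ := mul_cos_eq_of_mul_cot_eq hs₁ ha₁
  have hc₂ := mul_cos_eq_of_mul_cot_eq hs₂ ha₂
  rw [pi_div_two_mul_cos_mul_sin_sub_div h₁.ne' hc₁, pi_div_two_mul_cos_mul_sin_sub_div h₂.ne' hc₂]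
  calc _ = π / 2 * (sin θ₁ ^ 2 / θ₁ ^ 2 * ((a * sin θ₂ ^ 2 - θ₂ ^ 2) / θ₂ ^ 4) -
          sin θ₂ ^ 2 / θ₂ ^ 2 * ((a * sin θ₁ ^ 2 - θ₁ ^ 2) / θ₁ ^ 4)) := by ring
    _ = π / 2 * ((1 - a) * (sin θ₁ ^ 2 - sin θ₂ ^ 2) / (a * θ₁ ^ 2 * θ₂ ^ 2)) := by
      rw [det_eq_of_sq_mul_eq h₁.ne' h₂.ne' ha0 (sq_mul_sin_sq_eq hc₁) (sq_mul_sin_sq_eq hc₂)]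
    _ ≠ 0 := by
      have h1a : 1 - a ≠ 0 := sub_ne_zero.mpr (Ne.symm ha1)
      have hds : sin θ₁ ^ 2 - sin θ₂ ^ 2 ≠ 0 := sub_ne_zero.mpr hsin
      positivity
end

section
/- Let μ, λ ∈ ℝ with μ·sin(λ) ≠ 0, and let θ₀ > 0, θ ≥ 0. If the pair (θ₀, θ) satisfies the equation θ₀·μ·sin(λ)·cos*(θ) = (θ₀²·μ·cos(λ) + 1/(μ·θ₀·sin(λ)))·sin*(θ)/θ (where cos*, sin* denote either both the trigonometric or both the hyperbolic functions, and sin*(θ)/θ := 1 if θ = 0), then sin*(θ) ≠ 0 if θ ≠ 0, and the equation is equivalent to θ·cot*(θ) = 1/(μ²θ₀²sin²(λ)) + θ₀·cot(λ). -/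
/-! If `sin* θ = 0` the equation forces `θ₀ μ sin λ · cos* θ = 0`, impossible since `cos* θ = ±1`
or `cosh θ > 0`. Otherwise both sides may be divided by `θ₀ μ sin λ · sin* θ / θ ≠ 0`. -/

open Real

section TrigPair

variable {cs sn : ℝ → ℝ}

theorem trigPair_apply_zero
    (hstar : (cs = cos ∧ sn = sin) ∨ (cs = cosh ∧ sn = sinh)) : cs 0 = 1 := by
  rcases hstar with ⟨rfl, -⟩ | ⟨rfl, -⟩ <;> simp

theorem trigPair_fst_ne_zero_of_snd_eq_zero
    (hstar : (cs = cos ∧ sn = sin) ∨ (cs = cosh ∧ sn = sinh)) {θ : ℝ} (h : sn θ = 0) :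
    cs θ ≠ 0 := by
  rcases hstar with ⟨rfl, rfl⟩ | ⟨rfl, -⟩
  · rcases sin_eq_zero_iff_cos_eq.mp h with h1 | h1 <;> rw [h1] <;> norm_num
  · exact (cosh_pos θ).ne'

end TrigPair

theorem dispersion_coeff_div {μ lam θ₀ : ℝ} (hmuls : μ * sin lam ≠ 0) (hθ₀ : θ₀ ≠ 0) :
    (θ₀ ^ 2 * μ * cos lam + 1 / (μ * θ₀ * sin lam)) / (θ₀ * μ * sin lam) =
      1 / (μ ^ 2 * θ₀ ^ 2 * sin lam ^ 2) + θ₀ * (cos lam / sin lam) := by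
  have hμ : μ ≠ 0 := left_ne_zero_of_mul hmuls
  have hs : sin lam ≠ 0 := right_ne_zero_of_mul hmuls
  field_simp
  ring

theorem bifurcation_condition_general (μ lam θ₀ θ : ℝ) (cs sn : ℝ → ℝ)
    (hstar : (cs = Real.cos ∧ sn = Real.sin) ∨ (cs = Real.cosh ∧ sn = Real.sinh))
    (hmuls : μ * Real.sin lam ≠ 0) (hθ₀ : 0 < θ₀)
    (heq : θ₀ * μ * Real.sin lam * cs θ =
      (θ₀ ^ 2 * μ * Real.cos lam + 1 / (μ * θ₀ * Real.sin lam)) *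
        (if θ = 0 then 1 else sn θ / θ)) :
    (θ ≠ 0 → sn θ ≠ 0) ∧
    (if θ = 0 then (1 : ℝ) else θ * (cs θ / sn θ)) =
      1 / (μ ^ 2 * θ₀ ^ 2 * Real.sin lam ^ 2) + θ₀ * (Real.cos lam / Real.sin lam) := by
  have hA : θ₀ * μ * sin lam ≠ 0 := by rw [mul_assoc]; exact mul_ne_zero hθ₀.ne' hmuls
  have hsn : θ ≠ 0 → sn θ ≠ 0 := by
    intro hθ hsn0
    rw [if_neg hθ, hsn0, zero_div, mul_zero] at heq
    exact mul_ne_zero hA (trigPair_fst_ne_zero_of_snd_eq_zero hstar hsn0) heq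
  have hq : (if θ = 0 then 1 else sn θ / θ) ≠ 0 := by
    split_ifs with hθ
    exacts [one_ne_zero, div_ne_zero (hsn hθ) hθ]
  have hratio : cs θ / (if θ = 0 then 1 else sn θ / θ) =
      (θ₀ ^ 2 * μ * cos lam + 1 / (μ * θ₀ * sin lam)) / (θ₀ * μ * sin lam) :=
    (div_eq_div_iff hq hA).mpr (by rw [mul_comm, heq])
  refine ⟨hsn, ?_⟩
  rw [← dispersion_coeff_div hmuls hθ₀.ne', ← hratio]
  split_ifs with hθ
  · rw [hθ, trigPair_apply_zero hstar, div_one]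
  · rw [div_div_eq_mul_div, mul_div_right_comm, mul_comm]

/-- The bifurcation condition (Lemma 3.5): if `(θ₀, θ)` satisfies the dispersion-type
equation `θ₀ μ sin λ · cos*(θ) = (θ₀² μ cos λ + 1/(μ θ₀ sin λ)) · sin*(θ)/θ`
(where `(cos*, sin*)` is either `(cos, sin)` or `(cosh, sinh)`, and `sin*(θ)/θ := 1` at
`θ = 0`), then `sin*(θ) ≠ 0` whenever `θ ≠ 0`, and the equation is equivalent to
`θ·cot*(θ) = 1/(μ²θ₀²sin²λ) + θ₀·cot(λ)` (with `θ·cot*(θ) := 1` at `θ = 0`). -/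
theorem bifurcation_condition (μ lam θ₀ θ : ℝ) (cs sn : ℝ → ℝ)
    (hstar : (cs = Real.cos ∧ sn = Real.sin) ∨ (cs = Real.cosh ∧ sn = Real.sinh))
    (hmuls : μ * Real.sin lam ≠ 0) (hθ₀ : 0 < θ₀) (hθ : 0 ≤ θ)
    (heq : θ₀ * μ * Real.sin lam * cs θ =
      (θ₀ ^ 2 * μ * Real.cos lam + 1 / (μ * θ₀ * Real.sin lam)) *
        (if θ = 0 then 1 else sn θ / θ)) :
    (θ ≠ 0 → sn θ ≠ 0) ∧
    (if θ = 0 then (1 : ℝ) else θ * (cs θ / sn θ)) =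
      1 / (μ ^ 2 * θ₀ ^ 2 * Real.sin lam ^ 2) + θ₀ * (Real.cos lam / Real.sin lam) :=
  bifurcation_condition_general μ lam θ₀ θ cs sn hstar hmuls hθ₀ heq
end

section
/- With k₁ = 4, k₂ = 7, there exists t₀ ∈ (49 + π², 49 + 4π²) (so α = −t₀ < −49) such that √(t₀−16)·cot(√(t₀−16)) = √(t₀−49)·cot(√(t₀−49)), and the common value a satisfies a ∉ {0,1}. Moreover 7/4 ∉ ℤ and 49 − 16 = 33 satisfies 3π² < 33 and 33 ≠ (2n+1)π² for all n ∈ ℤ. -/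
set_option maxHeartbeats 1000000

/-- Setup of Example 5.3: with `k₁ = 4`, `k₂ = 7` there is `t₀ ∈ (49 + π², 49 + 4π²)`
where the two dispersion curves meet with common value `a ∉ {0,1}`; moreover `7/4 ∉ ℤ`,
`3π² < 33` and `33 ≠ (2n+1)π²` for all integers `n`. -/
theorem example_4_7 :
    (∃ t₀ : ℝ, t₀ ∈ Set.Ioo (49 + Real.pi ^ 2) (49 + 4 * Real.pi ^ 2) ∧
      Real.sin (Real.sqrt (t₀ - 16)) ≠ 0 ∧ Real.sin (Real.sqrt (t₀ - 49)) ≠ 0 ∧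
      Real.sqrt (t₀ - 16) * (Real.cos (Real.sqrt (t₀ - 16)) / Real.sin (Real.sqrt (t₀ - 16))) =
        Real.sqrt (t₀ - 49) *
          (Real.cos (Real.sqrt (t₀ - 49)) / Real.sin (Real.sqrt (t₀ - 49))) ∧
      Real.sqrt (t₀ - 16) *
          (Real.cos (Real.sqrt (t₀ - 16)) / Real.sin (Real.sqrt (t₀ - 16))) ≠ 0 ∧
      Real.sqrt (t₀ - 16) *
          (Real.cos (Real.sqrt (t₀ - 16)) / Real.sin (Real.sqrt (t₀ - 16))) ≠ 1) ∧
    (¬ ∃ m : ℤ, (7 : ℝ) / 4 = (m : ℝ)) ∧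
    3 * Real.pi ^ 2 < 33 ∧
    (∀ n : ℤ, (33 : ℝ) ≠ (2 * (n : ℝ) + 1) * Real.pi ^ 2) := by
  have hπ1 : 3.1415 < Real.pi := by linarith [Real.pi_gt_d6]
  have hπ2 : Real.pi < 3.1416 := by linarith [Real.pi_lt_d6]
  have hπ0 : 0 < Real.pi := by linarith
  refine ⟨?_, ?_, by nlinarith, ?_⟩
  · -- main existence statement
    set A : ℝ := 49 + Real.pi ^ 2 with hA
    set B : ℝ := 49 + 16 * Real.pi ^ 2 / 9 with hB
    have hAB : A ≤ B := by rw [hA, hB]; nlinarith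
    set G : ℝ → ℝ := fun t =>
      Real.sqrt (t - 16) * Real.cos (Real.sqrt (t - 16)) * Real.sin (Real.sqrt (t - 49)) -
        Real.sqrt (t - 49) * Real.cos (Real.sqrt (t - 49)) * Real.sin (Real.sqrt (t - 16))
      with hG
    -- quantitative facts at u = √(t-16) for t ∈ [A, B]
    have key : ∀ t, A ≤ t → t ≤ B →
        0 < Real.sin (Real.sqrt (t - 16)) ∧ 0 < Real.cos (Real.sqrt (t - 16)) ∧
        3 < Real.sqrt (t - 16) * Real.cos (Real.sqrt (t - 16)) := by
      intro t h1 h2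
      rw [hA] at h1; rw [hB] at h2
      have hul : 2 * Real.pi < Real.sqrt (t - 16) := by
        rw [Real.lt_sqrt (by positivity)]; nlinarith
      have huu : Real.sqrt (t - 16) < 2 * Real.pi + 0.84 := by
        rw [Real.sqrt_lt' (by positivity)]; nlinarith
      set u := Real.sqrt (t - 16) with hu
      have h1' : 0 < u - 2 * Real.pi := by linarith
      have h2' : u - 2 * Real.pi < 0.84 := by linarith
      have hsinu : 0 < Real.sin u := by
        have := Real.sin_pos_of_pos_of_lt_pi h1' (by linarith : u - 2 * Real.pi < Real.pi)
        rwa [Real.sin_sub_two_pi] at this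
      have hcosu : (0.64 : ℝ) ≤ Real.cos u := by
        have hc := Real.one_sub_sq_div_two_le_cos (x := u - 2 * Real.pi)
        rw [Real.cos_sub_two_pi] at hc
        nlinarith
      exact ⟨hsinu, by linarith, by nlinarith⟩
    -- continuity
    have hcont : ContinuousOn G (Set.Icc A B) := by
      apply Continuous.continuousOn
      fun_prop
    -- sign at the left endpoint
    have hsA : Real.sqrt (A - 49) = Real.pi := by
      rw [show A - 49 = Real.pi ^ 2 by rw [hA]; ring, Real.sqrt_sq hπ0.le]
    have hGA : 0 < G A := by
      obtain ⟨hsinuA, -, -⟩ := key A le_rfl hAB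
      simp only [hG, hsA, Real.sin_pi, Real.cos_pi]
      nlinarith
    -- sign at the right endpoint
    have hsB : Real.sqrt (B - 49) = 4 * Real.pi / 3 := by
      rw [show B - 49 = (4 * Real.pi / 3) ^ 2 by rw [hB]; ring,
        Real.sqrt_sq (by positivity)]
    have hGB : G B < 0 := by
      obtain ⟨hsinuB, hcosuB, hbig⟩ := key B hAB le_rfl
      have h43 : (4 : ℝ) * Real.pi / 3 = Real.pi / 3 + Real.pi := by ring
      have hsin43 : Real.sin (4 * Real.pi / 3) = -(Real.sqrt 3 / 2) := by
        rw [h43, Real.sin_add_pi, Real.sin_pi_div_three]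
      have hcos43 : Real.cos (4 * Real.pi / 3) = -(1 / 2) := by
        rw [h43, Real.cos_add_pi, Real.cos_pi_div_three]
      have hsqrt3 : (1.7 : ℝ) < Real.sqrt 3 := by
        have h3 : Real.sqrt 3 ^ 2 = 3 := Real.sq_sqrt (by norm_num)
        nlinarith [Real.sqrt_nonneg 3]
      have hsle : Real.sin (Real.sqrt (B - 16)) ≤ 1 := Real.sin_le_one _
      simp only [hG, hsB, hsin43, hcos43]
      nlinarith
    -- intermediate value theorem
    have h0mem : (0 : ℝ) ∈ Set.Icc (G B) (G A) := ⟨hGB.le, hGA.le⟩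
    obtain ⟨t₀, ht₀mem, ht₀⟩ := intermediate_value_Icc' hAB hcont h0mem
    obtain ⟨htA, htB⟩ := ht₀mem
    have htA' : A < t₀ := by
      rcases lt_or_eq_of_le htA with h | h
      · exact h
      · exfalso; rw [← h] at ht₀; rw [ht₀] at hGA; exact lt_irrefl _ hGA
    have htB' : t₀ < B := by
      rcases lt_or_eq_of_le htB with h | h
      · exact h
      · exfalso; rw [h] at ht₀; rw [ht₀] at hGB; exact lt_irrefl _ hGB
    obtain ⟨hsinu, hcosu, hbig⟩ := key t₀ htA htB
    -- facts about s = √(t₀ - 49)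
    have hsl : Real.pi < Real.sqrt (t₀ - 49) := by
      rw [Real.lt_sqrt hπ0.le]
      rw [hA] at htA'; linarith
    have hsu : Real.sqrt (t₀ - 49) < 4 * Real.pi / 3 := by
      rw [Real.sqrt_lt' (by positivity)]
      rw [hB] at htB'
      have hr : (4 * Real.pi / 3) ^ 2 = 16 * Real.pi ^ 2 / 9 := by ring
      linarith
    set s := Real.sqrt (t₀ - 49) with hs
    have hsins : Real.sin s < 0 := by
      have h1' : 0 < s - Real.pi := by linarith
      have h2' : s - Real.pi < Real.pi := by linarith
      have := Real.sin_pos_of_pos_of_lt_pi h1' h2'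
      rw [Real.sin_sub_pi] at this
      linarith
    set u := Real.sqrt (t₀ - 16) with hu
    refine ⟨t₀, ⟨?_, ?_⟩, ne_of_gt hsinu, ne_of_lt hsins, ?_, ?_, ?_⟩
    · rw [hA] at htA'; exact htA'
    · rw [hB] at htB'
      have := sq_nonneg Real.pi
      linarith
    · -- the cotangent equality
      have hG0 : u * Real.cos u * Real.sin s - s * Real.cos s * Real.sin u = 0 := ht₀
      have hne1 : Real.sin u ≠ 0 := ne_of_gt hsinu
      have hne2 : Real.sin s ≠ 0 := ne_of_lt hsins
      have hmain : (u * Real.cos u) / Real.sin u = (s * Real.cos s) / Real.sin s := by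
        rw [div_eq_div_iff hne1 hne2]
        linear_combination hG0
      calc u * (Real.cos u / Real.sin u) = (u * Real.cos u) / Real.sin u := by ring
        _ = (s * Real.cos s) / Real.sin s := hmain
        _ = s * (Real.cos s / Real.sin s) := by ring
    · -- common value nonzero
      have hupos : 0 < u := by
        rw [hu]
        apply Real.sqrt_pos.mpr
        rw [hA] at htA'
        have := sq_nonneg Real.pi
        linarith
      positivity
    · -- common value not one
      have : 1 < u * (Real.cos u / Real.sin u) := by
        rw [show u * (Real.cos u / Real.sin u) = u * Real.cos u / Real.sin u by ring,
          lt_div_iff₀ hsinu, one_mul]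
        have := Real.sin_le_one u
        linarith
      linarith
  · -- 7/4 is not an integer
    rintro ⟨m, hm⟩
    have h7 : (7 : ℝ) = 4 * (m : ℝ) := by linarith
    have h7' : (7 : ℤ) = 4 * m := by exact_mod_cast h7
    omega
  · -- 33 ≠ (2n+1)π²
    intro n h
    have h3 : 3 * Real.pi ^ 2 < 33 := by nlinarith
    have h4 : (33 : ℝ) < 4 * Real.pi ^ 2 := by nlinarith
    have hl : (3 : ℝ) < 2 * (n : ℝ) + 1 := by nlinarith
    have hr : (2 * (n : ℝ) + 1) < 4 := by nlinarith
    have hl' : (3 : ℤ) < 2 * n + 1 := by exact_mod_cast hl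
    have hr' : (2 * n + 1 : ℤ) < 4 := by exact_mod_cast hr
    omega
end
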